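/- Let v1 v2 … vt be a path (t ≥ 3) in a graph G where every vi has degree 3, with each vi (2 ≤ i ≤ t-1) having one neighbor off the path, and vt having two neighbors off the path. Given any k-edge-coloring (k ∈ {2,3}) of the three edges incident to v1, the coloring extends, using only colors 1 and 2 on the remaining edges incident to v2,…,vt, to a coloring whose color-blind partitions are pairwise distinct on each edge vi v_{i+1} of the path (1 ≤ i ≤ t-1). -/
import Mathlib


open Finset

/-- The color-blind partition of `v`: the multiset of (nonzero) counts of incident
edges of each color, i.e. the partition of `deg v` with trailing zeroes removed. -/
def cbp {V : Type*} [Fintype V] [DecidableEq V] (G : SimpleGraph V) [DecidableRel G.Adj]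
    {k : ℕ} (c : Sym2 V → Fin k) (v : V) : Multiset ℕ :=
  (((Finset.univ : Finset (Fin k)).val.map fun i =>
    ((G.neighborFinset v).filter fun w => c s(v, w) = i).card).filter fun m => m ≠ 0)

/-- `c` is a color-blind distinguishing edge-coloring of `G`. -/
def IsCBD {V : Type*} [Fintype V] [DecidableEq V] (G : SimpleGraph V) [DecidableRel G.Adj]
    {k : ℕ} (c : Sym2 V → Fin k) : Prop :=
  ∀ u v : V, G.Adj u v → cbp G c u ≠ cbp G c v

def part3 (k : ℕ) (x y z : Fin k) : Multiset ℕ :=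
  ((Finset.univ : Finset (Fin k)).val.map fun i =>
    ({x, y, z} : Multiset (Fin k)).count i).filter fun m => m ≠ 0

def pick {k : ℕ} (hk2 : 2 ≤ k) (a : Fin k) (p : Multiset ℕ) : Fin k × Fin k :=
  let z0 : Fin k := ⟨0, by omega⟩
  let z1 : Fin k := ⟨1, hk2⟩
  if part3 k a z0 z0 ≠ p then (z0, z0)
  else if part3 k a z0 z1 ≠ p then (z0, z1)
  else (z1, z1)

lemma key {k : ℕ} (hk : k = 2 ∨ k = 3) (hk2 : 2 ≤ k) (a : Fin k) :
    part3 k a ⟨0, by omega⟩ ⟨0, by omega⟩ = part3 k a ⟨0, by omega⟩ ⟨1, hk2⟩ →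
    part3 k a ⟨1, hk2⟩ ⟨1, hk2⟩ ≠ part3 k a ⟨0, by omega⟩ ⟨0, by omega⟩ := by
  rcases hk with rfl | rfl <;> revert hk2 a <;> decide

lemma pick_spec {k : ℕ} (hk : k = 2 ∨ k = 3) (hk2 : 2 ≤ k) (a : Fin k) (p : Multiset ℕ) :
    part3 k a (pick hk2 a p).1 (pick hk2 a p).2 ≠ p ∧
    ((pick hk2 a p).1).val < 2 ∧ ((pick hk2 a p).2).val < 2 := by
  unfold pick
  simp only []
  split_ifs with h1 h2
  · exact ⟨h1, by simp, by simp⟩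
  · exact ⟨h2, by simp, by simp⟩
  · push_neg at h1 h2
    refine ⟨?_, by simp, by simp⟩
    rw [← h1]
    exact key hk hk2 a (h1.trans h2.symm)

def Fseq {k : ℕ} (hk2 : 2 ≤ k) (p0 : Multiset ℕ) (a1 : Fin k) : ℕ → Fin k × Fin k × Multiset ℕ
  | 0 => (⟨0, by omega⟩, ⟨0, by omega⟩, p0)
  | n + 1 =>
    let prev := Fseq hk2 p0 a1 n
    let a := if n = 0 then a1 else prev.1
    let bc := pick hk2 a prev.2.2
    (bc.1, bc.2, part3 k a bc.1 bc.2)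

lemma Fseq_succ {k : ℕ} (hk2 : 2 ≤ k) (p0 : Multiset ℕ) (a1 : Fin k) (n : ℕ) :
    Fseq hk2 p0 a1 (n + 1) =
      ((pick hk2 (if n = 0 then a1 else (Fseq hk2 p0 a1 n).1) (Fseq hk2 p0 a1 n).2.2).1,
       (pick hk2 (if n = 0 then a1 else (Fseq hk2 p0 a1 n).1) (Fseq hk2 p0 a1 n).2.2).2,
       part3 k (if n = 0 then a1 else (Fseq hk2 p0 a1 n).1)
         (pick hk2 (if n = 0 then a1 else (Fseq hk2 p0 a1 n).1) (Fseq hk2 p0 a1 n).2.2).1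
         (pick hk2 (if n = 0 then a1 else (Fseq hk2 p0 a1 n).1) (Fseq hk2 p0 a1 n).2.2).2) := rfl

lemma Fseq_step {k : ℕ} (hk : k = 2 ∨ k = 3) (hk2 : 2 ≤ k) (p0 : Multiset ℕ) (a1 : Fin k) (n : ℕ) :
    (Fseq hk2 p0 a1 (n + 1)).2.2 ≠ (Fseq hk2 p0 a1 n).2.2 := by
  rw [Fseq_succ]
  exact (pick_spec hk hk2 _ _).1

lemma Fseq_val {k : ℕ} (hk : k = 2 ∨ k = 3) (hk2 : 2 ≤ k) (p0 : Multiset ℕ) (a1 : Fin k) (n : ℕ) :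
    ((Fseq hk2 p0 a1 (n + 1)).1).val < 2 ∧ ((Fseq hk2 p0 a1 (n + 1)).2.1).val < 2 := by
  rw [Fseq_succ]
  exact ⟨(pick_spec hk hk2 _ _).2.1, (pick_spec hk hk2 _ _).2.2⟩

lemma cbp_congr {V : Type*} [Fintype V] [DecidableEq V] (G : SimpleGraph V) [DecidableRel G.Adj]
    {k : ℕ} (c₁ c₂ : Sym2 V → Fin k) (p : V)
    (h : ∀ w ∈ G.neighborFinset p, c₁ s(p, w) = c₂ s(p, w)) :
    cbp G c₁ p = cbp G c₂ p := by
  unfold cbp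
  congr 1
  apply Multiset.map_congr rfl
  intro i _
  congr 1
  apply Finset.filter_congr
  intro w hw
  rw [h w hw]

lemma cbp_eq_part3 {V : Type*} [Fintype V] [DecidableEq V] (G : SimpleGraph V) [DecidableRel G.Adj]
    {k : ℕ} (c : Sym2 V → Fin k) (p x y z : V)
    (h : G.neighborFinset p = {x, y, z}) (hxy : x ≠ y) (hxz : x ≠ z) (hyz : y ≠ z) :
    cbp G c p = part3 k (c s(p, x)) (c s(p, y)) (c s(p, z)) := by
  unfold cbp part3
  congr 1
  apply Multiset.map_congr rfl
  intro i _
  rw [h]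
  have hxs : x ∉ ({y, z} : Finset V) := by simp [hxy, hxz]
  have hys : y ∉ ({z} : Finset V) := by simp [hyz]
  rw [show ({x, y, z} : Finset V) = insert x (insert y {z}) from rfl,
    Finset.card_filter, Finset.sum_insert hxs, Finset.sum_insert hys, Finset.sum_singleton]
  simp only [Multiset.insert_eq_cons, Multiset.count_cons, Multiset.count_singleton]
  simp only [eq_comm (a := i)]
  split_ifs <;> omega

theorem cubic_path_extension {V : Type*} [Fintype V] [DecidableEq V]
    (G : SimpleGraph V) [DecidableRel G.Adj] (t : ℕ) (ht : 3 ≤ t) (v : ℕ → V)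
    (hinj : ∀ i j, i < t → j < t → v i = v j → i = j)
    (hadj : ∀ i, i + 1 < t → G.Adj (v i) (v (i + 1)))
    (hdeg : ∀ i < t, G.degree (v i) = 3)
    (hint : ∀ i, 0 < i → i + 1 < t → ∃ u, (∀ j < t, u ≠ v j) ∧
        G.neighborFinset (v i) = {v (i - 1), v (i + 1), u})
    (hlast : ∃ u w, u ≠ w ∧ (∀ j < t, u ≠ v j ∧ w ≠ v j) ∧
        G.neighborFinset (v (t - 1)) = {v (t - 2), u, w})
    (k : ℕ) (hk : k = 2 ∨ k = 3) (c : Sym2 V → Fin k) :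
    ∃ c' : Sym2 V → Fin k,
      (∀ e, v 0 ∈ e → c' e = c e) ∧
      (∀ i, 0 < i → i < t → ∀ w, G.Adj (v i) w → w ≠ v 0 → (c' s(v i, w)).val < 2) ∧
      (∀ i, i + 1 < t → cbp G c' (v i) ≠ cbp G c' (v (i + 1))) := by
  classical
  have hk2 : 2 ≤ k := by rcases hk with rfl | rfl <;> omega
  obtain ⟨uu, ww, huw, huwp, hnl⟩ := hlast
  haveI : Nonempty V := ⟨v 0⟩
  choose! u hu1 hu2 using hint
  set F := Fseq hk2 (cbp G c (v 0)) (c s(v 0, v 1)) with hF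
  set c' : Sym2 V → Fin k := fun e =>
    if h1 : ∃ i, 0 < i ∧ i + 1 < t ∧ e = s(v i, v (i + 1)) then (F h1.choose).1
    else if h2 : ∃ i, 0 < i ∧ i + 1 < t ∧ e = s(v i, u i) then (F h2.choose).2.1
    else if e = s(v (t - 1), uu) then (F (t - 1)).1
    else if e = s(v (t - 1), ww) then (F (t - 1)).2.1
    else c e with hc'def
  -- evaluation on path edges
  have epath : ∀ i, 0 < i → i + 1 < t → c' s(v i, v (i + 1)) = (F i).1 := by
    intro i h1 h2
    have hex : ∃ j, 0 < j ∧ j + 1 < t ∧ s(v i, v (i + 1)) = s(v j, v (j + 1)) := ⟨i, h1, h2, rfl⟩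
    simp only [hc'def]
    rw [dif_pos hex]
    have hch : hex.choose = i := by
      obtain ⟨hj1, hj2, hj3⟩ := hex.choose_spec
      rcases Sym2.eq_iff.mp hj3 with ⟨ha, hb⟩ | ⟨ha, hb⟩
      · exact (hinj i hex.choose (by omega) (by omega) ha).symm
      · have e1 := hinj i (hex.choose + 1) (by omega) (by omega) ha
        have e2 := hinj (i + 1) hex.choose (by omega) (by omega) hb
        omega
    rw [hch]
  -- evaluation on pendant edges of interior vertices
  have eu : ∀ i, 0 < i → i + 1 < t → c' s(v i, u i) = (F i).2.1 := by
    intro i h1 h2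
    have hno : ¬ ∃ j, 0 < j ∧ j + 1 < t ∧ s(v i, u i) = s(v j, v (j + 1)) := by
      rintro ⟨j, hj1, hj2, hj3⟩
      rcases Sym2.eq_iff.mp hj3 with ⟨ha, hb⟩ | ⟨ha, hb⟩
      · exact hu1 i h1 h2 (j + 1) hj2 hb
      · exact hu1 i h1 h2 j (by omega) hb
    have hex : ∃ j, 0 < j ∧ j + 1 < t ∧ s(v i, u i) = s(v j, u j) := ⟨i, h1, h2, rfl⟩
    simp only [hc'def]
    rw [dif_neg hno, dif_pos hex]
    have hch : hex.choose = i := by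
      obtain ⟨hj1, hj2, hj3⟩ := hex.choose_spec
      rcases Sym2.eq_iff.mp hj3 with ⟨ha, hb⟩ | ⟨ha, hb⟩
      · exact (hinj i hex.choose (by omega) (by omega) ha).symm
      · exact absurd ha.symm (hu1 hex.choose hj1 hj2 i (by omega))
    rw [hch]
  -- evaluation on the two pendant edges of the last vertex
  have hnopath : ∀ x, (∀ j < t, x ≠ v j) →
      (¬ ∃ j, 0 < j ∧ j + 1 < t ∧ s(v (t - 1), x) = s(v j, v (j + 1))) ∧
      (¬ ∃ j, 0 < j ∧ j + 1 < t ∧ s(v (t - 1), x) = s(v j, u j)) := by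
    intro x hx
    constructor
    · rintro ⟨j, hj1, hj2, hj3⟩
      rcases Sym2.eq_iff.mp hj3 with ⟨ha, hb⟩ | ⟨ha, hb⟩
      · exact hx (j + 1) hj2 hb
      · exact hx j (by omega) hb
    · rintro ⟨j, hj1, hj2, hj3⟩
      rcases Sym2.eq_iff.mp hj3 with ⟨ha, hb⟩ | ⟨ha, hb⟩
      · have := hinj (t - 1) j (by omega) (by omega) ha
        omega
      · exact hu1 j hj1 hj2 (t - 1) (by omega) ha.symm
  have euu : c' s(v (t - 1), uu) = (F (t - 1)).1 := by
    obtain ⟨h1, h2⟩ := hnopath uu (fun j hj => (huwp j hj).1)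
    simp only [hc'def]
    rw [dif_neg h1, dif_neg h2]
    simp
  have eww : c' s(v (t - 1), ww) = (F (t - 1)).2.1 := by
    obtain ⟨h1, h2⟩ := hnopath ww (fun j hj => (huwp j hj).2)
    have h3 : s(v (t - 1), ww) ≠ s(v (t - 1), uu) := by
      intro hcontra
      rcases Sym2.eq_iff.mp hcontra with ⟨ha, hb⟩ | ⟨ha, hb⟩
      · exact huw hb.symm
      · exact (huwp (t - 1) (by omega)).1 ha.symm
    simp only [hc'def]
    rw [dif_neg h1, dif_neg h2, if_neg h3]
    simp
  -- edges containing v 0 are unchanged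
  have e0 : ∀ e, v 0 ∈ e → c' e = c e := by
    intro e he
    induction e using Sym2.ind with
    | _ a b =>
    have hmem := he
    have hno1 : ¬ ∃ j, 0 < j ∧ j + 1 < t ∧ s(a, b) = s(v j, v (j + 1)) := by
      rintro ⟨j, hj1, hj2, hj3⟩
      rw [hj3] at hmem
      rcases Sym2.mem_iff.mp hmem with hb | hb
      · have := hinj 0 j (by omega) (by omega) hb; omega
      · have := hinj 0 (j + 1) (by omega) (by omega) hb; omega
    have hno2 : ¬ ∃ j, 0 < j ∧ j + 1 < t ∧ s(a, b) = s(v j, u j) := by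
      rintro ⟨j, hj1, hj2, hj3⟩
      rw [hj3] at hmem
      rcases Sym2.mem_iff.mp hmem with hb | hb
      · have := hinj 0 j (by omega) (by omega) hb; omega
      · exact hu1 j hj1 hj2 0 (by omega) hb.symm
    have hno3 : s(a, b) ≠ s(v (t - 1), uu) := by
      intro hcontra
      rw [hcontra] at hmem
      rcases Sym2.mem_iff.mp hmem with hb | hb
      · have := hinj 0 (t - 1) (by omega) (by omega) hb; omega
      · exact (huwp 0 (by omega)).1 hb.symm
    have hno4 : s(a, b) ≠ s(v (t - 1), ww) := by
      intro hcontra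
      rw [hcontra] at hmem
      rcases Sym2.mem_iff.mp hmem with hb | hb
      · have := hinj 0 (t - 1) (by omega) (by omega) hb; omega
      · exact (huwp 0 (by omega)).2 hb.symm
    simp only [hc'def]
    rw [dif_neg hno1, dif_neg hno2, if_neg hno3, if_neg hno4]
  -- the cbp of each path vertex is as computed by Fseq
  have hcbp : ∀ i < t, cbp G c' (v i) = (F i).2.2 := by
    intro i hi
    rcases Nat.eq_zero_or_pos i with rfl | hpos
    · have : cbp G c' (v 0) = cbp G c (v 0) := by
        apply cbp_congr
        intro w _
        exact e0 s(v 0, w) (Sym2.mem_mk_left _ _)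
      rw [this, hF]
      rfl
    by_cases hi' : i + 1 < t
    · -- interior vertex
      have hne1 : v (i - 1) ≠ v (i + 1) := by
        intro hcontra; have := hinj (i - 1) (i + 1) (by omega) (by omega) hcontra; omega
      have hne2 : v (i - 1) ≠ u i := fun hcontra => hu1 i hpos hi' (i - 1) (by omega) hcontra.symm
      have hne3 : v (i + 1) ≠ u i := fun hcontra => hu1 i hpos hi' (i + 1) (by omega) hcontra.symm
      rw [cbp_eq_part3 G c' (v i) (v (i - 1)) (v (i + 1)) (u i) (hu2 i hpos hi') hne1 hne2 hne3]
      obtain ⟨m, rfl⟩ : ∃ m, i = m + 1 := ⟨i - 1, by omega⟩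
      have hin : c' s(v (m + 1), v m) = (if m = 0 then c s(v 0, v 1) else (F m).1) := by
        rcases Nat.eq_zero_or_pos m with rfl | hm
        · rw [if_pos rfl, Sym2.eq_swap]
          exact e0 s(v 0, v 1) (Sym2.mem_mk_left _ _)
        · rw [if_neg (by omega), Sym2.eq_swap]
          obtain ⟨m', rfl⟩ : ∃ m', m = m' + 1 := ⟨m - 1, by omega⟩
          exact epath (m' + 1) (by omega) (by omega)
      rw [show m + 1 - 1 = m from rfl, hin, epath (m + 1) (by omega) hi', eu (m + 1) (by omega) hi']
      rw [hF, Fseq_succ]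
    · -- last vertex
      have hieq : i = t - 1 := by omega
      subst hieq
      have hne1 : v (t - 2) ≠ uu := fun hcontra => (huwp (t - 2) (by omega)).1 hcontra.symm
      have hne2 : v (t - 2) ≠ ww := fun hcontra => (huwp (t - 2) (by omega)).2 hcontra.symm
      rw [cbp_eq_part3 G c' (v (t - 1)) (v (t - 2)) uu ww hnl hne1 hne2 huw]
      have hin : c' s(v (t - 1), v (t - 2)) = (F (t - 2)).1 := by
        rw [Sym2.eq_swap]
        have h1 : t - 2 + 1 = t - 1 := by omega
        rw [show s(v (t - 2), v (t - 1)) = s(v (t - 2), v (t - 2 + 1)) from by rw [h1]]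
        exact epath (t - 2) (by omega) (by omega)
      rw [hin, euu, eww]
      have h2 : t - 1 = (t - 2) + 1 := by omega
      rw [hF, h2, Fseq_succ]
      rw [if_neg (by omega : ¬ t - 2 = 0)]
  refine ⟨c', e0, ?_, ?_⟩
  · -- colors 0/1 on new edges
    intro i h0 hit w hadjw hw0
    have hw : w ∈ G.neighborFinset (v i) := (SimpleGraph.mem_neighborFinset G (v i) w).mpr hadjw
    by_cases hi' : i + 1 < t
    · rw [hu2 i h0 hi'] at hw
      simp only [Finset.mem_insert, Finset.mem_singleton] at hw
      rcases hw with rfl | rfl | rfl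
      · have h1 : 1 < i := by
          rcases Nat.lt_or_ge 1 i with h | h
          · exact h
          · exfalso; apply hw0; congr 1; omega
        have hin : c' s(v i, v (i - 1)) = (F (i - 1)).1 := by
          rw [Sym2.eq_swap]
          obtain ⟨m, hm⟩ : ∃ m, i - 1 = m + 1 := ⟨i - 2, by omega⟩
          rw [show s(v (i - 1), v i) = s(v (i - 1), v (i - 1 + 1)) from by rw [show i - 1 + 1 = i from by omega]]
          exact epath (i - 1) (by omega) (by omega)
        rw [hin]
        obtain ⟨m, hm⟩ : ∃ m, i - 1 = m + 1 := ⟨i - 2, by omega⟩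
        rw [hm, hF]
        exact (Fseq_val hk hk2 _ _ m).1
      · rw [epath i h0 hi']
        obtain ⟨m, hm⟩ : ∃ m, i = m + 1 := ⟨i - 1, by omega⟩
        rw [hm, hF]
        exact (Fseq_val hk hk2 _ _ m).1
      · rw [eu i h0 hi']
        obtain ⟨m, hm⟩ : ∃ m, i = m + 1 := ⟨i - 1, by omega⟩
        rw [hm, hF]
        exact (Fseq_val hk hk2 _ _ m).2
    · have hieq : i = t - 1 := by omega
      subst hieq
      rw [hnl] at hw
      simp only [Finset.mem_insert, Finset.mem_singleton] at hw
      rcases hw with rfl | rfl | rfl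
      · have hin : c' s(v (t - 1), v (t - 2)) = (F (t - 2)).1 := by
          rw [Sym2.eq_swap]
          rw [show s(v (t - 2), v (t - 1)) = s(v (t - 2), v (t - 2 + 1)) from by rw [show t - 2 + 1 = t - 1 from by omega]]
          exact epath (t - 2) (by omega) (by omega)
        rw [hin]
        obtain ⟨m, hm⟩ : ∃ m, t - 2 = m + 1 := ⟨t - 3, by omega⟩
        rw [hm, hF]
        exact (Fseq_val hk hk2 _ _ m).1
      · rw [euu]
        obtain ⟨m, hm⟩ : ∃ m, t - 1 = m + 1 := ⟨t - 2, by omega⟩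
        rw [hm, hF]
        exact (Fseq_val hk hk2 _ _ m).1
      · rw [eww]
        obtain ⟨m, hm⟩ : ∃ m, t - 1 = m + 1 := ⟨t - 2, by omega⟩
        rw [hm, hF]
        exact (Fseq_val hk hk2 _ _ m).2
  · -- distinct cbp along the path
    intro i hi
    rw [hcbp i (by omega), hcbp (i + 1) hi]
    exact (Fseq_step hk hk2 _ _ i).symm
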